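/- Let T be a natural number and let β₁, …, β_T ∈ (0, 1). For each t define the Markov kernel κ_t from ℝ to ℝ by κ_t(x) = N(√(1−β_t)·x, β_t). Set α_t = 1 − β_t and ᾱ_t = ∏_{i=1}^{t} α_i. Then for every x₀ ∈ ℝ and every 1 ≤ t ≤ T, the t-fold composition of the kernels applied at x₀ satisfies (κ_t ∘ κ_{t−1} ∘ ⋯ ∘ κ_1)(x₀) = N(√(ᾱ_t)·x₀, 1 − ᾱ_t). In particular, if x_t is obtained from x₀ by t steps of the forward diffusion q(x_t | x_{t−1}) = N(√(1−β_t)·x_{t−1}, β_t), then the conditional law of x_t given x₀ is N(√(ᾱ_t)·x₀, 1 − ᾱ_t), i.e. x_t = √(ᾱ_t)·x₀ + √(1 − ᾱ_t)·ε with ε ~ N(0,1). -/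

import Mathlib

open MeasureTheory ProbabilityTheory Real
open scoped NNReal

/-- `iteratedComp κ t` is the composition `κ t ∘ₖ κ (t-1) ∘ₖ ⋯ ∘ₖ κ 1` of the Markov kernels
`κ 1, …, κ t` (and the identity kernel for `t = 0`). -/
noncomputable def iteratedComp (κ : ℕ → Kernel ℝ ℝ) : ℕ → Kernel ℝ ℝ
  | 0 => Kernel.id
  | t + 1 => (κ (t + 1)) ∘ₖ iteratedComp κ t


lemma integrable_exp_quadratic {a : ℝ} (ha : 0 < a) (b c : ℝ) :
    Integrable (fun y : ℝ => rexp (-a * y ^ 2 + b * y + c)) := by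
  have h : ∀ y : ℝ, rexp (-a * y ^ 2 + b * y + c)
      = rexp (c + b ^ 2 / (4 * a)) * rexp (-a * (y - b / (2 * a)) ^ 2) := by
    intro y
    rw [← Real.exp_add]
    congr 1
    field_simp
    ring
  simp_rw [h]
  exact ((integrable_exp_neg_mul_sq ha).comp_sub_right (b / (2 * a))).const_mul _

lemma integral_exp_quadratic {a : ℝ} (ha : 0 < a) (b c : ℝ) :
    ∫ y : ℝ, rexp (-a * y ^ 2 + b * y + c)
      = Real.sqrt (π / a) * rexp (c + b ^ 2 / (4 * a)) := by
  have h : ∀ y : ℝ, rexp (-a * y ^ 2 + b * y + c)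
      = rexp (-a * (y - b / (2 * a)) ^ 2) * rexp (c + b ^ 2 / (4 * a)) := by
    intro y
    rw [← Real.exp_add]
    congr 1
    field_simp
    ring
  simp_rw [h, integral_mul_const]
  rw [integral_sub_right_eq_self (fun y : ℝ => rexp (-a * y ^ 2)) (b / (2 * a)),
    integral_gaussian]

lemma gaussianPDFReal_conv (m c x : ℝ) {v w : ℝ≥0} (hv : v ≠ 0) (hw : w ≠ 0) :
    ∫ y : ℝ, gaussianPDFReal m v y * gaussianPDFReal (c * y) w x
      = gaussianPDFReal (c * m) (⟨c ^ 2, sq_nonneg c⟩ * v + w) x := by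
  have hv' : 0 < (v : ℝ) := by positivity
  have hw' : 0 < (w : ℝ) := by positivity
  set vr : ℝ := (v : ℝ)
  set wr : ℝ := (w : ℝ)
  set a : ℝ := (wr + c ^ 2 * vr) / (2 * vr * wr) with ha_def
  set b : ℝ := m / vr + c * x / wr with hb_def
  set d : ℝ := -(m ^ 2 / (2 * vr) + x ^ 2 / (2 * wr)) with hd_def
  set K : ℝ := (Real.sqrt (2 * π * vr))⁻¹ * (Real.sqrt (2 * π * wr))⁻¹ with hK_def
  have ha : 0 < a := by positivity
  have h1 : ∀ y : ℝ, gaussianPDFReal m v y * gaussianPDFReal (c * y) w x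
      = K * rexp (-a * y ^ 2 + b * y + d) := by
    intro y
    unfold gaussianPDFReal
    rw [hK_def]
    rw [show (Real.sqrt (2 * π * vr))⁻¹ * rexp (-(y - m) ^ 2 / (2 * vr)) *
        ((Real.sqrt (2 * π * wr))⁻¹ * rexp (-(x - c * y) ^ 2 / (2 * wr)))
      = (Real.sqrt (2 * π * vr))⁻¹ * (Real.sqrt (2 * π * wr))⁻¹ *
        (rexp (-(y - m) ^ 2 / (2 * vr)) * rexp (-(x - c * y) ^ 2 / (2 * wr))) by ring,
      ← Real.exp_add]
    congr 2
    rw [ha_def, hb_def, hd_def]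
    field_simp
    ring
  simp_rw [h1, MeasureTheory.integral_const_mul, integral_exp_quadratic ha]
  have hVr : ((⟨c ^ 2, sq_nonneg c⟩ * v + w : ℝ≥0) : ℝ) = c ^ 2 * vr + wr := by
    push_cast
    rfl
  have hV' : 0 < c ^ 2 * vr + wr := by positivity
  unfold gaussianPDFReal
  rw [hVr]
  have hexp : d + b ^ 2 / (4 * a) = -(x - c * m) ^ 2 / (2 * (c ^ 2 * vr + wr)) := by
    rw [ha_def, hb_def, hd_def]
    field_simp
    ring
  have hpref : K * Real.sqrt (π / a) = (Real.sqrt (2 * π * (c ^ 2 * vr + wr)))⁻¹ := by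
    rw [hK_def, ← mul_inv, ← Real.sqrt_mul (by positivity) (2 * π * wr), ← Real.sqrt_inv,
      ← Real.sqrt_mul (by positivity) (π / a), ← Real.sqrt_inv]
    congr 1
    rw [ha_def]
    field_simp
    ring
  rw [hexp] at *
  rw [← hpref]
  ring

lemma integrable_gaussianPDFReal_conv (m c x : ℝ) {v w : ℝ≥0} (hv : v ≠ 0) (hw : w ≠ 0) :
    Integrable (fun y : ℝ => gaussianPDFReal m v y * gaussianPDFReal (c * y) w x) := by
  have hv' : 0 < (v : ℝ) := by positivity
  have hw' : 0 < (w : ℝ) := by positivity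
  have ha : 0 < ((w : ℝ) + c ^ 2 * v) / (2 * v * w) := by positivity
  have h1 : ∀ y : ℝ, gaussianPDFReal m v y * gaussianPDFReal (c * y) w x
      = (Real.sqrt (2 * π * v))⁻¹ * (Real.sqrt (2 * π * w))⁻¹ *
        rexp (-(((w : ℝ) + c ^ 2 * v) / (2 * v * w)) * y ^ 2
          + (m / v + c * x / w) * y + -(m ^ 2 / (2 * v) + x ^ 2 / (2 * w))) := by
    intro y
    unfold gaussianPDFReal
    rw [show (Real.sqrt (2 * π * (v : ℝ)))⁻¹ * rexp (-(y - m) ^ 2 / (2 * v)) *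
        ((Real.sqrt (2 * π * (w : ℝ)))⁻¹ * rexp (-(x - c * y) ^ 2 / (2 * w)))
      = (Real.sqrt (2 * π * (v : ℝ)))⁻¹ * (Real.sqrt (2 * π * (w : ℝ)))⁻¹ *
        (rexp (-(y - m) ^ 2 / (2 * v)) * rexp (-(x - c * y) ^ 2 / (2 * w))) by ring,
      ← Real.exp_add]
    congr 2
    field_simp
    ring
  simp_rw [h1]
  exact (integrable_exp_quadratic ha _ _).const_mul _

lemma gaussianReal_bind (m c : ℝ) {v w : ℝ≥0} (hv : v ≠ 0) (hw : w ≠ 0)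
    (hmeas : Measurable (fun y : ℝ => gaussianReal (c * y) w)) :
    (gaussianReal m v).bind (fun y => gaussianReal (c * y) w)
      = gaussianReal (c * m) (⟨c ^ 2, sq_nonneg c⟩ * v + w) := by
  have hV : (⟨c ^ 2, sq_nonneg c⟩ * v + w : ℝ≥0) ≠ 0 := by
    intro h
    exact hw (by simpa using (add_eq_zero.mp h).2)
  have hcont : Continuous (fun p : ℝ × ℝ => gaussianPDFReal (c * p.1) w p.2) := by
    unfold gaussianPDFReal
    fun_prop
  have hjm : Measurable (fun p : ℝ × ℝ => gaussianPDF (c * p.1) w p.2) :=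
    ENNReal.measurable_ofReal.comp hcont.measurable
  ext s hs
  rw [Measure.bind_apply hs hmeas.aemeasurable]
  have h1 : ∀ y : ℝ, gaussianReal (c * y) w s = ∫⁻ x in s, gaussianPDF (c * y) w x :=
    fun y => gaussianReal_apply _ hw s
  simp_rw [h1]
  rw [gaussianReal_of_var_ne_zero _ hv,
    lintegral_withDensity_eq_lintegral_mul volume (measurable_gaussianPDF m v)
      (Measurable.lintegral_prod_right' hjm)]
  have h2 : ∀ y : ℝ, (gaussianPDF m v * fun y => ∫⁻ x in s, gaussianPDF (c * y) w x) y
      = ∫⁻ x in s, gaussianPDF m v y * gaussianPDF (c * y) w x := by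
    intro y
    simp only [Pi.mul_apply]
    rw [lintegral_const_mul _ (measurable_gaussianPDF _ _)]
  simp_rw [h2]
  rw [lintegral_lintegral_swap]
  swap
  · exact (((measurable_gaussianPDF m v).comp measurable_fst).mul hjm).aemeasurable
  have h3 : ∀ x : ℝ, ∫⁻ y, gaussianPDF m v y * gaussianPDF (c * y) w x
      = gaussianPDF (c * m) (⟨c ^ 2, sq_nonneg c⟩ * v + w) x := by
    intro x
    simp_rw [gaussianPDF,
      ← ENNReal.ofReal_mul (gaussianPDFReal_nonneg m v _)]
    rw [← ofReal_integral_eq_lintegral_ofReal (integrable_gaussianPDFReal_conv m c x hv hw)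
      (ae_of_all _ fun y => mul_nonneg (gaussianPDFReal_nonneg _ _ _)
        (gaussianPDFReal_nonneg _ _ _)),
      gaussianPDFReal_conv m c x hv hw]
  simp_rw [h3]
  exact (gaussianReal_apply _ hV s).symm

lemma prod_one_sub_lt_one (T : ℕ) (β : ℕ → ℝ≥0)
    (hβ : ∀ t, 1 ≤ t → t ≤ T → 0 < β t ∧ β t < 1) :
    ∀ t, 1 ≤ t → t ≤ T → (∏ i ∈ Finset.Icc 1 t, (1 - β i)) < 1 := by
  intro t ht1
  induction t, ht1 using Nat.le_induction with
  | base =>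
    intro h
    rw [Finset.Icc_self, Finset.prod_singleton]
    exact tsub_lt_self one_pos (hβ 1 le_rfl h).1
  | succ t ht IH =>
    intro h
    rw [Finset.prod_Icc_succ_top (by omega)]
    calc (∏ i ∈ Finset.Icc 1 t, (1 - β i)) * (1 - β (t + 1))
        ≤ (∏ i ∈ Finset.Icc 1 t, (1 - β i)) * 1 := mul_le_mul_right tsub_le_self _
      _ = ∏ i ∈ Finset.Icc 1 t, (1 - β i) := mul_one _
      _ < 1 := IH (by omega)

/-- For the forward diffusion with variance schedule `β₁, …, β_T ∈ (0,1)`, whose one-step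
kernels are `κ t x = N(√(1−β t)·x, β t)`, the `t`-fold composition applied at `x₀` is the
Gaussian `N(√(ᾱ t)·x₀, 1 − ᾱ t)` where `ᾱ t = ∏_{i=1}^{t} (1 − β i)`: that is, the conditional
law of `x_t` given `x₀` is `N(√(ᾱ t)·x₀, 1 − ᾱ t)`. -/
theorem forward_diffusion_marginal (T : ℕ) (β : ℕ → ℝ≥0)
    (hβ : ∀ t, 1 ≤ t → t ≤ T → 0 < β t ∧ β t < 1)
    (κ : ℕ → Kernel ℝ ℝ)
    (hκ : ∀ t, 1 ≤ t → t ≤ T → ∀ x : ℝ,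
      κ t x = gaussianReal ((NNReal.sqrt (1 - β t) : ℝ) * x) (β t))
    (x₀ : ℝ) (t : ℕ) (ht1 : 1 ≤ t) (htT : t ≤ T) :
    iteratedComp κ t x₀
      = gaussianReal ((NNReal.sqrt (∏ i ∈ Finset.Icc 1 t, (1 - β i)) : ℝ) * x₀)
          (1 - ∏ i ∈ Finset.Icc 1 t, (1 - β i)) := by
  induction t, ht1 using Nat.le_induction with
  | base =>
    have h1 : iteratedComp κ 1 = κ 1 := by
      rw [iteratedComp, iteratedComp, Kernel.comp_id]
    rw [h1, hκ 1 le_rfl htT x₀, Finset.Icc_self, Finset.prod_singleton,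
      tsub_tsub_cancel_of_le (hβ 1 le_rfl htT).2.le]
  | succ t ht IH =>
    have htT' : t ≤ T := by omega
    have hβt := hβ (t + 1) (by omega) htT
    set c : ℝ := (NNReal.sqrt (1 - β (t + 1)) : ℝ) with hc_def
    have hfun : ⇑(κ (t + 1)) = fun y => gaussianReal (c * y) (β (t + 1)) :=
      funext (hκ (t + 1) (by omega) htT)
    have hmeas : Measurable fun y : ℝ => gaussianReal (c * y) (β (t + 1)) :=
      hfun ▸ (κ (t + 1)).measurable
    have hA : (∏ i ∈ Finset.Icc 1 t, (1 - β i)) < 1 :=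
      prod_one_sub_lt_one T β hβ t ht htT'
    have hA1 : (∏ i ∈ Finset.Icc 1 (t + 1), (1 - β i))
        = (∏ i ∈ Finset.Icc 1 t, (1 - β i)) * (1 - β (t + 1)) :=
      Finset.prod_Icc_succ_top (by omega) _
    have hv : (1 - ∏ i ∈ Finset.Icc 1 t, (1 - β i) : ℝ≥0) ≠ 0 := by
      rw [Ne, tsub_eq_zero_iff_le]
      exact not_le.mpr hA
    have hw : β (t + 1) ≠ 0 := hβt.1.ne'
    have hstep : iteratedComp κ (t + 1) x₀ = (iteratedComp κ t x₀).bind ⇑(κ (t + 1)) := by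
      rw [iteratedComp, Kernel.comp_apply]
    rw [hstep, IH htT', hfun, gaussianReal_bind _ c hv hw hmeas]
    have hc2 : (⟨c ^ 2, sq_nonneg c⟩ : ℝ≥0) = (1 - β (t + 1) : ℝ≥0) := by
      apply Subtype.ext
      show c ^ 2 = ((1 - β (t + 1) : ℝ≥0) : ℝ)
      rw [hc_def, ← NNReal.coe_pow, NNReal.sq_sqrt]
    congr 1
    · rw [← mul_assoc]
      congr 1
      rw [hc_def, ← NNReal.coe_mul, ← NNReal.sqrt_mul, hA1, mul_comm]
    · rw [hc2, ← NNReal.coe_inj, hA1]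
      have h1 : β (t + 1) ≤ 1 := hβt.2.le
      have h2 : (∏ i ∈ Finset.Icc 1 t, (1 - β i)) ≤ 1 := hA.le
      have h3 : (∏ i ∈ Finset.Icc 1 t, (1 - β i)) * (1 - β (t + 1)) ≤ 1 :=
        mul_le_one' h2 tsub_le_self
      rw [NNReal.coe_add, NNReal.coe_mul, NNReal.coe_sub h1, NNReal.coe_sub h2,
        NNReal.coe_sub h3, NNReal.coe_mul, NNReal.coe_sub h1]
      push_cast
      ring
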